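/- arXiv:2205.08341 — 6 statements merged into one kernel-verified Lean document; each statement's English description precedes it below -/
import Mathlib

section
/- Let (g, [·,…,·], ε, α) be an n-Hom-Lie color algebra and β: g → g an endomorphism of n-Hom-Lie color algebras of degree zero (β∘α = α∘β and β preserves the bracket). Then (g, [·,…,·]_β, ε, β∘α), where [x₁,…,xₙ]_β = β([x₁,…,xₙ]), is again an n-Hom-Lie color algebra. -/
open scoped BigOperators

/-- The axioms of an `n`-Hom-Lie color algebra (arity `n = m+1`). -/
structure IsNHomLieColor (K : Type*) {Γ V : Type*} [Field K] [AddCommGroup Γ]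
    [AddCommGroup V] [Module K V]
    (m : ℕ) (grading : Γ → Submodule K V) (ε : Γ → Γ → K)
    (bracket : MultilinearMap K (fun _ : Fin (m+1) => V) V) (α : V →ₗ[K] V) : Prop where
  eps_ne_zero : ∀ a b, ε a b ≠ 0
  eps_symm : ∀ a b, ε a b * ε b a = 1
  eps_add_right : ∀ a b c, ε a (b + c) = ε a b * ε a c
  eps_add_left : ∀ a b c, ε (a + b) c = ε a c * ε b c
  alpha_deg : ∀ γ : Γ, ∀ v ∈ grading γ, α v ∈ grading γ
  bracket_deg : ∀ (d : Fin (m+1) → Γ) (x : Fin (m+1) → V),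
      (∀ i, x i ∈ grading (d i)) → bracket x ∈ grading (∑ i, d i)
  skew : ∀ (d : Fin (m+1) → Γ) (x : Fin (m+1) → V), (∀ i, x i ∈ grading (d i)) →
      ∀ i j : Fin (m+1), (i : ℕ) + 1 = (j : ℕ) →
      bracket x = -(ε (d i) (d j)) • bracket (x ∘ Equiv.swap i j)
  jacobi : ∀ (dx : Fin m → Γ) (dy : Fin (m+1) → Γ) (x : Fin m → V) (y : Fin (m+1) → V),
      (∀ i, x i ∈ grading (dx i)) → (∀ i, y i ∈ grading (dy i)) →
      bracket (Fin.snoc (fun i => α (x i)) (bracket y)) =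
        ∑ i : Fin (m+1),
          ε (∑ j, dx j) (∑ j ∈ Finset.univ.filter (fun j => j < i), dy j) •
            bracket (Function.update (fun j => α (y j)) i (bracket (Fin.snoc x (y i))))

/-- Yau twist by an endomorphism: if `(g,[·,…,·],ε,α)` is an `n`-Hom-Lie color
algebra and `β` is a degree-zero endomorphism of it, then
`(g, β∘[·,…,·], ε, β∘α)` is again an `n`-Hom-Lie color algebra. -/
theorem yauTwist_endomorphism
    {K Γ V : Type*} [Field K] [AddCommGroup Γ] [AddCommGroup V] [Module K V]
    (m : ℕ) (grading : Γ → Submodule K V) (ε : Γ → Γ → K)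
    (bracket : MultilinearMap K (fun _ : Fin (m+1) => V) V) (α β : V →ₗ[K] V)
    (h : IsNHomLieColor K m grading ε bracket α)
    (hβdeg : ∀ γ : Γ, ∀ v ∈ grading γ, β v ∈ grading γ)
    (hβα : β ∘ₗ α = α ∘ₗ β)
    (hβbr : ∀ x : Fin (m+1) → V, β (bracket x) = bracket (fun i => β (x i))) :
    IsNHomLieColor K m grading ε (β.compMultilinearMap bracket) (β ∘ₗ α) := by
  have hcomm : ∀ v, β (α v) = α (β v) := fun v => LinearMap.congr_fun hβα v
  constructor
  · exact h.eps_ne_zero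
  · exact h.eps_symm
  · exact h.eps_add_right
  · exact h.eps_add_left
  · intro γ v hv
    simp only [LinearMap.comp_apply]
    exact hβdeg γ _ (h.alpha_deg γ v hv)
  · intro d x hx
    simp only [LinearMap.compMultilinearMap_apply]
    exact hβdeg _ _ (h.bracket_deg d x hx)
  · intro d x hx i j hij
    simp only [LinearMap.compMultilinearMap_apply]
    rw [h.skew d x hx i j hij, map_smul]
  · intro dx dy x y hx hy
    have key := h.jacobi dx dy (fun i => β (x i)) (fun i => β (y i))
      (fun i => hβdeg _ _ (hx i)) (fun i => hβdeg _ _ (hy i))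
    simp only [LinearMap.compMultilinearMap_apply, LinearMap.comp_apply]
    have e1 : (Fin.snoc (fun i => β (α (x i))) (β (bracket y)) : Fin (m+1) → V)
        = Fin.snoc (fun i => α (β (x i))) (bracket fun i => β (y i)) := by
      funext j
      refine Fin.lastCases ?_ ?_ j <;> simp [hβbr, hcomm]
    have e2 : ∀ i : Fin (m+1),
        (fun j => β ((Fin.snoc x (y i) : Fin (m+1) → V) j))
          = Fin.snoc (fun j => β (x j)) (β (y i)) := by
      intro i; funext j
      refine Fin.lastCases ?_ ?_ j <;> simp
    have e3 : ∀ i : Fin (m+1),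
        Function.update (fun j => β (α (y j))) i (β (bracket (Fin.snoc x (y i))))
        = Function.update (fun j => α (β (y j))) i
            (bracket (Fin.snoc (fun j => β (x j)) (β (y i)))) := by
      intro i
      rw [hβbr, e2 i]
      funext j
      rcases eq_or_ne j i with rfl | hne
      · simp
      · simp [Function.update_of_ne hne, hcomm]
    rw [e1, key, map_sum]
    refine Finset.sum_congr rfl fun i _ => ?_
    rw [map_smul, e3 i]
end

section
/- Let (g, [·,…,·], ε) be an n-Lie color algebra and α: g → g an algebra endomorphism of degree zero. Then (g, α∘[·,…,·], ε, α) is an n-Hom-Lie color algebra (the Yau twist). -/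
open scoped BigOperators

/-- Yau twist: if `(g,[·,…,·],ε)` is an `n`-Lie color algebra (an `n`-Hom-Lie
color algebra with trivial twist) and `α` is a degree-zero algebra endomorphism,
then `(g, α∘[·,…,·], ε, α)` is an `n`-Hom-Lie color algebra. -/
theorem yauTwist_of_nLieColor
    {K Γ V : Type*} [Field K] [AddCommGroup Γ] [AddCommGroup V] [Module K V]
    (m : ℕ) (grading : Γ → Submodule K V) (ε : Γ → Γ → K)
    (bracket : MultilinearMap K (fun _ : Fin (m+1) => V) V) (α : V →ₗ[K] V)
    (h : IsNHomLieColor K m grading ε bracket (LinearMap.id : V →ₗ[K] V))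
    (hαdeg : ∀ γ : Γ, ∀ v ∈ grading γ, α v ∈ grading γ)
    (hαbr : ∀ x : Fin (m+1) → V, α (bracket x) = bracket (fun i => α (x i))) :
    IsNHomLieColor K m grading ε (α.compMultilinearMap bracket) α := by
  refine ⟨h.eps_ne_zero, h.eps_symm, h.eps_add_right, h.eps_add_left, hαdeg, ?_, ?_, ?_⟩
  · intro d x hx
    exact hαdeg _ _ (h.bracket_deg d x hx)
  · intro d x hx i j hij
    simp only [LinearMap.compMultilinearMap_apply]
    rw [h.skew d x hx i j hij, map_smul]
  · intro dx dy x y hx hy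
    simp only [LinearMap.compMultilinearMap_apply]
    have hx' : ∀ i, α (x i) ∈ grading (dx i) := fun i => hαdeg _ _ (hx i)
    have hy' : ∀ i, α (y i) ∈ grading (dy i) := fun i => hαdeg _ _ (hy i)
    have J := h.jacobi dx dy (fun i => α (x i)) (fun i => α (y i)) hx' hy'
    simp only [LinearMap.id_coe, id_eq] at J
    have hsn : ∀ i : Fin (m+1),
        bracket (Fin.snoc (fun j => α (x j)) (α (y i))) = α (bracket (Fin.snoc x (y i))) := by
      intro i
      rw [hαbr]
      congr 1
      funext j
      exact congrFun (Fin.comp_snoc α x (y i)).symm j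
    rw [hαbr y, J, map_sum]
    exact Finset.sum_congr rfl fun i _ => by rw [map_smul, hsn i]
end

section
/- Let G = (g, [·,…,·], ε, α) be a multiplicative n-Hom-Lie color algebra and p ≥ 0. Then the p-th derived algebra G^p = (g, α^{2^p − 1}∘[·,…,·], ε, α^{2^p}) is again an n-Hom-Lie color algebra. -/
open scoped BigOperators

/-
Twisting by a multiplicative, grading-preserving endomorphism `β` preserves the axioms: the algebra
`(g, β ∘ [·,…,·], ε, α ∘ β)` is again `n`-Hom-Lie color, because `β` can be pulled through every
bracket, which turns each axiom for the new structure into `β` applied to the corresponding axiom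
for the old one evaluated at `β`-images. The `p`-th derived algebra is the case `β = α^{2^p-1}`,
which is multiplicative and grading-preserving whenever `α` is, with `α ∘ β = α^{2^p}`.
-/

theorem Module.End.pow_apply_multilinearMap {R ι M : Type*} [CommSemiring R] [AddCommMonoid M]
    [Module R M] (B : MultilinearMap R (fun _ : ι => M) M) (f : Module.End R M)
    (hf : ∀ x, f (B x) = B (fun i => f (x i))) (k : ℕ) (x : ι → M) :
    (f ^ k) (B x) = B (fun i => (f ^ k) (x i)) := by
  induction k generalizing x with
  | zero => rfl
  | succ k ih =>
    rw [pow_succ', Module.End.mul_apply, ih, hf]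
    rfl

theorem IsNHomLieColor.twist {K Γ V : Type*} [Field K] [AddCommGroup Γ] [AddCommGroup V]
    [Module K V] {m : ℕ} {grading : Γ → Submodule K V} {ε : Γ → Γ → K}
    {bracket : MultilinearMap K (fun _ : Fin (m+1) => V) V} {α : Module.End K V}
    (h : IsNHomLieColor K m grading ε bracket α) (β : Module.End K V)
    (hβ_deg : ∀ γ : Γ, ∀ v ∈ grading γ, β v ∈ grading γ)
    (hβ_mult : ∀ x : Fin (m+1) → V, β (bracket x) = bracket (fun i => β (x i))) :
    IsNHomLieColor K m grading ε (β.compMultilinearMap bracket) (α * β) := by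
  refine ⟨h.eps_ne_zero, h.eps_symm, h.eps_add_right, h.eps_add_left, ?_, ?_, ?_, ?_⟩
  · intro γ v hv
    exact h.alpha_deg γ _ (hβ_deg γ v hv)
  · intro d x hx
    exact hβ_deg _ _ (h.bracket_deg d x hx)
  · intro d x hx i j hij
    simp only [LinearMap.compMultilinearMap_apply]
    rw [h.skew d x hx i j hij, map_smul]
  · intro dx dy x y hx hy
    have hβx : ∀ i, β (x i) ∈ grading (dx i) := fun i => hβ_deg _ _ (hx i)
    have hβy : ∀ i, β (y i) ∈ grading (dy i) := fun i => hβ_deg _ _ (hy i)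
    have hβ_snoc : ∀ i, β (bracket (Fin.snoc x (y i))) =
        bracket (Fin.snoc (fun j => β (x j)) (β (y i))) := fun i => by
      rw [hβ_mult]; exact congrArg bracket (Fin.comp_snoc β x (y i))
    simp only [LinearMap.compMultilinearMap_apply, Module.End.mul_apply, hβ_mult y, hβ_snoc]
    rw [h.jacobi dx dy _ _ hβx hβy]
    simp only [map_sum, map_smul]

/-- If `G = (g,[·,…,·],ε,α)` is a multiplicative `n`-Hom-Lie color algebra and
`p ≥ 0`, the `p`-th derived algebra `G^p = (g, α^{2^p-1}∘[·,…,·], ε, α^{2^p})`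
is again an `n`-Hom-Lie color algebra. -/
theorem derived_nHomLieColor
    {K Γ V : Type*} [Field K] [AddCommGroup Γ] [AddCommGroup V] [Module K V]
    (m : ℕ) (grading : Γ → Submodule K V) (ε : Γ → Γ → K)
    (bracket : MultilinearMap K (fun _ : Fin (m+1) => V) V) (α : Module.End K V)
    (h : IsNHomLieColor K m grading ε bracket α)
    (hmult : ∀ x : Fin (m+1) → V, α (bracket x) = bracket (fun i => α (x i)))
    (p : ℕ) :
    IsNHomLieColor K m grading ε
      ((α ^ (2 ^ p - 1)).compMultilinearMap bracket) (α ^ (2 ^ p)) := by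
  have h_twist := h.twist (α ^ (2 ^ p - 1))
    (fun γ => Module.End.pow_apply_mem_of_forall_mem _ (h.alpha_deg γ))
    (Module.End.pow_apply_multilinearMap bracket α hmult _)
  rwa [← pow_succ', Nat.sub_add_cancel Nat.one_le_two_pow] at h_twist
end

section
/- Let (g, [·,…,·], ε) be an n-Lie color algebra with representation (M, ρ), α: g → g an algebra morphism, and μ: M → M a degree-zero linear map with ρ(α̃(X))∘μ = μ∘ρ(X) for all X. Then (M, ρ̃ = μ∘ρ, μ) is a representation of the Yau-twisted multiplicative n-Hom-Lie color algebra (g, α∘[·,…,·], ε, α). -/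
open scoped BigOperators

/-- If `(g,[·,…,·],ε)` is an `n`-Lie color algebra (arity `n = r+2`) with
representation `(M,ρ)`, `α` a degree-zero algebra morphism and `μ : M → M` a
degree-zero linear map with `ρ(α̃X)∘μ = μ∘ρ(X)`, then `(M, ρ̃ = μ∘ρ, μ)` is a
representation of the Yau-twisted multiplicative `n`-Hom-Lie color algebra
`(g, α∘[·,…,·], ε, α)`. -/
theorem yauTwist_representation
    {K Γ V M : Type*} [Field K] [AddCommGroup Γ] [AddCommGroup V] [Module K V]
    [AddCommGroup M] [Module K M]
    (r : ℕ) (grading : Γ → Submodule K V) (gradM : Γ → Submodule K M)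
    (ε : Γ → Γ → K)
    (bracket : MultilinearMap K (fun _ : Fin (r+2) => V) V) (α : V →ₗ[K] V)
    (h : IsNHomLieColor K (r+1) grading ε bracket (LinearMap.id : V →ₗ[K] V))
    (hαdeg : ∀ γ : Γ, ∀ v ∈ grading γ, α v ∈ grading γ)
    (hαbr : ∀ x : Fin (r+2) → V, α (bracket x) = bracket (fun i => α (x i)))
    (ρ : MultilinearMap K (fun _ : Fin (r+1) => V) (Module.End K M))
    (μ : M →ₗ[K] M)
    (hμdeg : ∀ γ : Γ, ∀ v ∈ gradM γ, μ v ∈ gradM γ)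
    -- `(M,ρ)` is a representation of the `n`-Lie color algebra `g`:
    (hrep2 : ∀ (dx dy : Fin (r+1) → Γ) (x y : Fin (r+1) → V),
      (∀ i, x i ∈ grading (dx i)) → (∀ i, y i ∈ grading (dy i)) →
      ρ x ∘ₗ ρ y - ε (∑ i, dx i) (∑ i, dy i) • (ρ y ∘ₗ ρ x) =
        ∑ i : Fin (r+1),
          ε (∑ j, dx j) (∑ j ∈ Finset.univ.filter (fun j => j < i), dy j) •
            ρ (Function.update y i (bracket (Fin.snoc x (y i)))))
    (hrep3 : ∀ (dx : Fin (r+2) → Γ) (x : Fin (r+2) → V) (y : Fin r → V),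
      (∀ i, x i ∈ grading (dx i)) →
      ρ (Fin.cons (bracket x) y) =
        ∑ i : Fin (r+2),
          ((-1 : K) ^ (r + 1 - (i : ℕ)) *
            ε (dx i) (∑ j ∈ Finset.univ.filter (fun j => i < j), dx j)) •
            (ρ (fun j => x (i.succAbove j)) ∘ₗ ρ (Fin.cons (x i) y)))
    -- compatibility of `μ` with `ρ` and `α`:
    (hcompat : ∀ x : Fin (r+1) → V, ρ (fun i => α (x i)) ∘ₗ μ = μ ∘ₗ ρ x) :
    -- `(M, ρ̃ = μ∘ρ, μ)` is a representation of `(g, α∘[·,…,·], ε, α)`: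
    (∀ x : Fin (r+1) → V,
      (μ ∘ₗ ρ (fun i => α (x i))) ∘ₗ μ = μ ∘ₗ (μ ∘ₗ ρ x)) ∧
    (∀ (dx dy : Fin (r+1) → Γ) (x y : Fin (r+1) → V),
      (∀ i, x i ∈ grading (dx i)) → (∀ i, y i ∈ grading (dy i)) →
      (μ ∘ₗ ρ (fun i => α (x i))) ∘ₗ (μ ∘ₗ ρ y) -
          ε (∑ i, dx i) (∑ i, dy i) •
            ((μ ∘ₗ ρ (fun i => α (y i))) ∘ₗ (μ ∘ₗ ρ x)) =
        ∑ i : Fin (r+1),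
          ε (∑ j, dx j) (∑ j ∈ Finset.univ.filter (fun j => j < i), dy j) •
            ((μ ∘ₗ ρ (Function.update (fun j => α (y j)) i
                (α (bracket (Fin.snoc x (y i)))))) ∘ₗ μ)) ∧
    (∀ (dx : Fin (r+2) → Γ) (x : Fin (r+2) → V) (y : Fin r → V),
      (∀ i, x i ∈ grading (dx i)) →
      (μ ∘ₗ ρ (Fin.cons (α (bracket x)) (fun j => α (y j)))) ∘ₗ μ =
        ∑ i : Fin (r+2),
          ((-1 : K) ^ (r + 1 - (i : ℕ)) *
            ε (dx i) (∑ j ∈ Finset.univ.filter (fun j => i < j), dx j)) •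
            ((μ ∘ₗ ρ (fun j => α (x (i.succAbove j)))) ∘ₗ
              (μ ∘ₗ ρ (Fin.cons (x i) y)))) := by
  have key : ∀ f : Fin (r+1) → V,
      (μ ∘ₗ ρ (fun i => α (f i))) ∘ₗ μ = (μ ∘ₗ μ) ∘ₗ ρ f := by
    intro f
    ext m
    have := congrArg (fun g => μ (g m)) (hcompat f)
    simpa using this
  have hsum : ∀ {ι : Type} (s : Finset ι) (g : ι → M →ₗ[K] M),
      (μ ∘ₗ μ) ∘ₗ (∑ i ∈ s, g i) = ∑ i ∈ s, (μ ∘ₗ μ) ∘ₗ g i := by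
    intro ι s g
    ext m
    simp [LinearMap.sum_apply, map_sum]
  refine ⟨?_, ?_, ?_⟩
  · intro x
    rw [key]
    rfl
  · intro dx dy x y hx hy
    have e1 : (μ ∘ₗ ρ (fun i => α (x i))) ∘ₗ (μ ∘ₗ ρ y) =
        (μ ∘ₗ μ) ∘ₗ (ρ x ∘ₗ ρ y) := by
      ext m
      have := congrArg (fun g => μ (g (ρ y m))) (hcompat x)
      simpa using this
    have e2 : (μ ∘ₗ ρ (fun i => α (y i))) ∘ₗ (μ ∘ₗ ρ x) =
        (μ ∘ₗ μ) ∘ₗ (ρ y ∘ₗ ρ x) := by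
      ext m
      have := congrArg (fun g => μ (g (ρ x m))) (hcompat y)
      simpa using this
    have e3 : (μ ∘ₗ μ) ∘ₗ (ρ x ∘ₗ ρ y) -
        ε (∑ i, dx i) (∑ i, dy i) • ((μ ∘ₗ μ) ∘ₗ (ρ y ∘ₗ ρ x)) =
        (μ ∘ₗ μ) ∘ₗ (ρ x ∘ₗ ρ y - ε (∑ i, dx i) (∑ i, dy i) • (ρ y ∘ₗ ρ x)) := by
      ext m
      simp
    rw [e1, e2, e3, hrep2 dx dy x y hx hy, hsum]
    refine Finset.sum_congr rfl fun i _ => ?_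
    have hu : (fun j => α (Function.update y i
        (bracket (Fin.snoc x (y i))) j)) =
        Function.update (fun j => α (y j)) i
          (α (bracket (Fin.snoc x (y i)))) := by
      funext j
      exact Function.apply_update (fun _ v => α v) y i _ j
    rw [← hu, key]
    ext m
    simp
  · intro dx x y hx
    have hc : (Fin.cons (α (bracket x)) (fun j => α (y j)) :
        Fin (r+1) → V) = fun i => α ((Fin.cons (bracket x) y : Fin (r+1) → V) i) := by
      funext i
      refine Fin.cases ?_ (fun j => ?_) i <;> simp
    rw [hc, key, hrep3 dx x y hx, hsum]
    refine Finset.sum_congr rfl fun i _ => ?_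
    ext m
    have := congrArg (fun g => μ (g (ρ (Fin.cons (x i) y) m)))
      (hcompat (fun j => x (i.succAbove j)))
    simp only [LinearMap.smul_apply, LinearMap.comp_apply, map_smul] at this ⊢
    rw [← this]
end

section
/- If g_λ and g_{λ'} are two equivalent formal deformations of an n-Hom-Lie color algebra g generated by ω and ω' respectively, then ω − ω' is a 2-coboundary; in particular ω and ω' define the same class in the second cohomology group H²_{α,μ}(g,g) with adjoint coefficients. -/
open scoped BigOperators

/-! The coefficient of `λ¹` in the equivalence `φ_λ ∘ [·]_λ = [·]'_λ ∘ φ_λ^{⊗n}` reads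
`ω₁(x) + φ₁[x] = ω'₁(x) + Σᵢ [x₁, …, φ₁(xᵢ), …, xₙ]`, because the only multi-indices of total
weight one are the unit vectors. Moving `φ₁(xᵢ)` to the last slot takes `n − i` adjacent
transpositions, each contributing `−ε` by skew-symmetry, which turns the sum into the first part
of `δ¹φ₁`. -/

open Finset

theorem Fin.sum_filter_castSucc_le_castSucc_eq_add {M : Type*} [AddCommMonoid M] {n : ℕ}
    (i : Fin n) (f : Fin n → M) :
    ∑ j with i.castSucc ≤ j.castSucc, f j = f i + ∑ j with i.succ ≤ j.castSucc, f j := by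
  simp only [Fin.castSucc_le_castSucc_iff, Fin.succ_le_castSucc_iff, filter_le_eq_Ici,
    filter_lt_eq_Ioi, ← Ioi_insert, sum_insert notMem_Ioi_self]

theorem Fin.sum_filter_lt_eq_sum_filter_succAbove {M : Type*} [AddCommMonoid M] {n : ℕ}
    (p : Fin (n + 1)) (f : Fin (n + 1) → M) :
    ∑ k with p < k, f k = ∑ j with p ≤ j.castSucc, f (p.succAbove j) := by
  simp only [sum_filter, Fin.sum_univ_succAbove _ p, lt_irrefl, if_false, zero_add,
    Fin.lt_succAbove_iff_le_castSucc]

theorem Fin.swap_castSucc_succ_succAbove_succ {n : ℕ} (i j : Fin n) :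
    Equiv.swap i.castSucc i.succ (i.succ.succAbove j) = i.castSucc.succAbove j := by
  simp only [Equiv.swap_apply_def, Fin.succAbove, Fin.ext_iff, Fin.lt_def]
  split_ifs <;> simp_all <;> omega

theorem Fin.insertNth_comp_swap_castSucc_succ {α : Type*} {n : ℕ} (i : Fin n) (a : α)
    (f : Fin n → α) :
    Fin.insertNth i.castSucc a f ∘ Equiv.swap i.castSucc i.succ = Fin.insertNth i.succ a f := by
  refine (Fin.insertNth_eq_iff.2 ⟨by simp, funext fun j => ?_⟩).symm
  rw [Fin.removeNth, Function.comp_apply, Fin.swap_castSucc_succ_succAbove_succ,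
    Fin.insertNth_apply_succAbove]

theorem Nat.sum_eq_one_iff_exists_eq_single {ι : Type*} [Fintype ι] [DecidableEq ι] {e : ι → ℕ} :
    ∑ i, e i = 1 ↔ ∃ j, e = Pi.single j 1 := by
  refine ⟨fun he => ?_, ?_⟩
  · obtain ⟨j, -, hj⟩ := exists_ne_zero_of_sum_ne_zero (he ▸ one_ne_zero)
    have hsplit := add_sum_erase univ e (mem_univ j)
    refine ⟨j, funext fun k => ?_⟩
    rcases eq_or_ne k j with rfl | hk
    · simp only [Pi.single_eq_same]; omega
    · rw [Pi.single_eq_of_ne hk]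
      exact sum_eq_zero_iff.1 (by omega) k (mem_erase.2 ⟨hk, mem_univ k⟩)
  · rintro ⟨j, rfl⟩
    simp

theorem Finset.Nat.sum_antidiagonalTuple_one_right {M : Type*} [AddCommMonoid M] (k : ℕ)
    (f : (Fin k → ℕ) → M) :
    ∑ e ∈ antidiagonalTuple k 1, f e = ∑ j, f (Pi.single j 1) := by
  have hinj : Function.Injective fun j : Fin k => (Pi.single j 1 : Fin k → ℕ) := fun a b h => by
    simpa [Pi.single_apply] using congr_fun h a
  have hunits : antidiagonalTuple k 1 = univ.image fun j => Pi.single j 1 := by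
    ext e
    simp [mem_antidiagonalTuple, Nat.sum_eq_one_iff_exists_eq_single, eq_comm]
  rw [hunits, sum_image hinj.injOn]

namespace IsNHomLieColor

variable {K Γ V : Type*} [Field K] [AddCommGroup Γ] [AddCommGroup V] [Module K V] {m : ℕ}
  {grading : Γ → Submodule K V} {ε : Γ → Γ → K}
  {bracket : MultilinearMap K (fun _ : Fin (m+1) => V) V} {α : V →ₗ[K] V}

theorem eps_zero_right (h : IsNHomLieColor K m grading ε bracket α) (a : Γ) : ε a 0 = 1 :=
  mul_left_cancel₀ (h.eps_ne_zero a 0) (by rw [← h.eps_add_right, add_zero, mul_one])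

theorem bracket_insertNth (h : IsNHomLieColor K m grading ε bracket α) (i : Fin (m+1))
    {dy : Fin m → Γ} {y : Fin m → V} (hy : ∀ j, y j ∈ grading (dy j)) {a : Γ} {v : V}
    (hv : v ∈ grading a) :
    bracket (Fin.insertNth i v y) =
      ((-1 : K) ^ (m - (i : ℕ)) * ε a (∑ j with i ≤ j.castSucc, dy j)) •
        bracket (Fin.snoc y v) := by
  induction i using Fin.reverseInduction with
  | last =>
    have hempty : ({j | Fin.last m ≤ j.castSucc} : Finset (Fin m)) = ∅ :=
      filter_false_of_mem fun j _ => not_le.2 (Fin.castSucc_lt_last j)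
    simp only [Fin.insertNth_last', hempty, sum_empty, h.eps_zero_right, Fin.val_last,
      Nat.sub_self, pow_zero, one_mul, one_smul]
  | cast i IH =>
    have hmem : ∀ k, Fin.insertNth (α := fun _ => V) i.castSucc v y k ∈
        grading (Fin.insertNth (α := fun _ => Γ) i.castSucc a dy k) :=
      fun k => Fin.succAboveCases i.castSucc (by simpa) (fun j => by simpa using hy j) k
    have hswap := h.skew _ _ hmem i.castSucc i.succ (by simp)
    have hdeg_succ : Fin.insertNth (α := fun _ => Γ) i.castSucc a dy i.succ = dy i := by
      rw [← Fin.succAbove_castSucc_self, Fin.insertNth_apply_succAbove]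
    rw [Fin.insertNth_comp_swap_castSucc_succ, IH, smul_smul, Fin.insertNth_apply_same,
      hdeg_succ] at hswap
    rw [hswap, Fin.sum_filter_castSucc_le_castSucc_eq_add, h.eps_add_right]
    have hexp : m - (i.castSucc : ℕ) = m - (i.succ : ℕ) + 1 := by
      simp only [Fin.val_castSucc, Fin.val_succ]; omega
    rw [hexp, pow_succ]
    congr 1
    ring

theorem bracket_update_eq_smul_snoc (h : IsNHomLieColor K m grading ε bracket α)
    (i : Fin (m+1)) {d : Fin (m+1) → Γ} {x : Fin (m+1) → V} (hx : ∀ j, x j ∈ grading (d j))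
    {v : V} (hv : v ∈ grading (d i)) :
    bracket (Function.update x i v) =
      ((-1 : K) ^ (m - (i : ℕ)) * ε (d i) (∑ j with i < j, d j)) •
        bracket (Fin.snoc (fun j => x (i.succAbove j)) v) := by
  rw [← Fin.insertNth_removeNth, Fin.sum_filter_lt_eq_sum_filter_succAbove]
  exact h.bracket_insertNth i (fun j => hx _) hv

end IsNHomLieColor

theorem equivalent_deformations_cohomologous_general
    {K Γ V : Type*} [Field K] [AddCommGroup Γ] [AddCommGroup V] [Module K V]
    (m : ℕ) (grading : Γ → Submodule K V) (ε : Γ → Γ → K)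
    (bracket : MultilinearMap K (fun _ : Fin (m+1) => V) V) (α : V →ₗ[K] V)
    (h : IsNHomLieColor K m grading ε bracket α)
    -- the two deformations, with coefficients `ω i`, `ω' i` and `ω₀ = ω'₀ = [·,…,·]`
    (ω ω' : ℕ → MultilinearMap K (fun _ : Fin (m+1) => V) V)
    (hω0 : ω 0 = bracket) (hω'0 : ω' 0 = bracket)
    -- the formal isomorphism `φ_λ = Σᵢ φᵢ λⁱ`, `φ₀ = id`, of degree zero
    (φ : ℕ → (V →ₗ[K] V)) (hφ0 : φ 0 = LinearMap.id)
    (hφdeg : ∀ i (γ : Γ), ∀ v ∈ grading γ, φ i v ∈ grading γ)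
    -- equivalence: `φ_λ ∘ [·,…,·]_λ = [·,…,·]'_{λ} ∘ φ_λ⊗…⊗φ_λ`, coefficientwise in `λ`
    (hequiv : ∀ (l : ℕ) (x : Fin (m+1) → V),
      ∑ i ∈ Finset.range (l + 1), φ i (ω (l - i) x) =
        ∑ e ∈ Finset.Nat.antidiagonalTuple (m + 2) l,
          ω' (e (Fin.last (m+1))) (fun j => φ (e j.castSucc) (x j))) :
    -- then `ω₁ − ω'₁ = δ¹φ₁` is a `2`-coboundary
    ∀ (d : Fin (m+1) → Γ) (x : Fin (m+1) → V), (∀ i, x i ∈ grading (d i)) →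
      ω 1 x - ω' 1 x =
        ∑ i : Fin (m+1),
          ((-1 : K) ^ (m - (i : ℕ)) *
            ε (d i) (∑ j ∈ Finset.univ.filter (fun j => i < j), d j)) •
            bracket (Fin.snoc (fun j => x (i.succAbove j)) (φ 1 (x i))) -
        φ 1 (bracket x) := by
  intro d x hx
  have hfirst := hequiv 1 x
  rw [sum_range_succ, sum_range_one, Nat.sum_antidiagonalTuple_one_right, Fin.sum_univ_castSucc]
    at hfirst
  have hsingle : ∀ i : Fin (m+1),
      (fun j => φ ((Pi.single i.castSucc 1 : Fin (m+2) → ℕ) j.castSucc) (x j)) =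
      Function.update x i (φ 1 (x i)) := by
    intro i
    funext j
    by_cases hj : j = i <;> simp [hj, hφ0]
  have hterm := fun i => h.bracket_update_eq_smul_snoc i hx (hφdeg 1 _ _ (hx i))
  have hlast :
      (fun j => φ ((Pi.single (Fin.last (m+1)) 1 : Fin (m+2) → ℕ) j.castSucc) (x j)) = x := by
    funext j
    simp [hφ0, (Fin.castSucc_lt_last j).ne]
  simp only [hsingle, hlast, Pi.single_eq_same, Pi.single_eq_of_ne (Fin.castSucc_lt_last _).ne',
    hω'0, hterm, hφ0, hω0, Nat.sub_zero, Nat.sub_self, LinearMap.id_apply] at hfirst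
  rw [sub_eq_sub_iff_add_eq_add]
  exact hfirst

/-- If two formal deformations of an `n`-Hom-Lie color algebra generated by `ω`
and `ω'` are equivalent via a formal isomorphism `φ_λ = Σ φᵢ λⁱ`, then
`ω − ω'` is a `2`-coboundary (namely `δ¹φ₁`); in particular `ω` and `ω'` define
the same second cohomology class with adjoint coefficients. -/
theorem equivalent_deformations_cohomologous
    {K Γ V : Type*} [Field K] [AddCommGroup Γ] [AddCommGroup V] [Module K V]
    (m : ℕ) (grading : Γ → Submodule K V) (ε : Γ → Γ → K)
    (bracket : MultilinearMap K (fun _ : Fin (m+1) => V) V) (α : V →ₗ[K] V)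
    (h : IsNHomLieColor K m grading ε bracket α)
    -- the two deformations, with coefficients `ω i`, `ω' i` and `ω₀ = ω'₀ = [·,…,·]`
    (ω ω' : ℕ → MultilinearMap K (fun _ : Fin (m+1) => V) V)
    (hω0 : ω 0 = bracket) (hω'0 : ω' 0 = bracket)
    (hωdeg : ∀ i (d : Fin (m+1) → Γ) (x : Fin (m+1) → V),
      (∀ j, x j ∈ grading (d j)) → ω i x ∈ grading (∑ j, d j))
    (hω'deg : ∀ i (d : Fin (m+1) → Γ) (x : Fin (m+1) → V),
      (∀ j, x j ∈ grading (d j)) → ω' i x ∈ grading (∑ j, d j))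
    -- the formal isomorphism `φ_λ = Σᵢ φᵢ λⁱ`, `φ₀ = id`, of degree zero,
    -- commuting with `α`
    (φ : ℕ → (V →ₗ[K] V)) (hφ0 : φ 0 = LinearMap.id)
    (hφdeg : ∀ i (γ : Γ), ∀ v ∈ grading γ, φ i v ∈ grading γ)
    (hφα : ∀ i, φ i ∘ₗ α = α ∘ₗ φ i)
    -- equivalence: `φ_λ ∘ [·,…,·]_λ = [·,…,·]'_{λ} ∘ φ_λ⊗…⊗φ_λ`, coefficientwise in `λ`
    (hequiv : ∀ (l : ℕ) (x : Fin (m+1) → V),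
      ∑ i ∈ Finset.range (l + 1), φ i (ω (l - i) x) =
        ∑ e ∈ Finset.Nat.antidiagonalTuple (m + 2) l,
          ω' (e (Fin.last (m+1))) (fun j => φ (e j.castSucc) (x j))) :
    -- then `ω₁ − ω'₁ = δ¹φ₁` is a `2`-coboundary
    ∀ (d : Fin (m+1) → Γ) (x : Fin (m+1) → V), (∀ i, x i ∈ grading (d i)) →
      ω 1 x - ω' 1 x =
        ∑ i : Fin (m+1),
          ((-1 : K) ^ (m - (i : ℕ)) *
            ε (d i) (∑ j ∈ Finset.univ.filter (fun j => i < j), d j)) •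
            bracket (Fin.snoc (fun j => x (i.succAbove j)) (φ 1 (x i))) -
        φ 1 (bracket x) :=
  equivalent_deformations_cohomologous_general m grading ε bracket α h ω ω' hω0 hω'0 φ hφ0 hφdeg
    hequiv
end

section
/- The Nijenhuis operator condition [Nx₁,…,Nxₙ] = N([x₁,…,xₙ]_N^{n−1}) is equivalent to the closed formula Σ_{j=0}^{n} (−1)^{n−j} N^{n−j}( Σ_{i₁<…<i_j} [x₁,…,Nx_{i₁},…,Nx_{i_j},…,xₙ] ) = 0. -/
open scoped BigOperators

namespace NijenhuisClosedFormula

variable {K Γ V : Type*} [Field K] [AddCommGroup Γ] [AddCommGroup V] [Module K V]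

/-- The iterated deformed brackets `[x₁,…,xₙ]_N^j` associated to a linear map
`N`: `[·]_N^0 = [·]`, and
`[x₁,…,xₙ]_N^{j+1} = Σ_{i₁<…<i_{j+1}} […,Nx_{i₁},…,Nx_{i_{j+1}},…] − N([x₁,…,xₙ]_N^j)`. -/
def Nbr (m : ℕ) (bracket : MultilinearMap K (fun _ : Fin (m+1) => V) V)
    (N : Module.End K V) : ℕ → (Fin (m+1) → V) → V
  | 0 => fun x => bracket x
  | j + 1 => fun x =>
      (∑ S ∈ Finset.powersetCard (j+1) (Finset.univ : Finset (Fin (m+1))),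
        bracket (fun i => if i ∈ S then N (x i) else x i)) -
        N (Nbr m bracket N j x)

lemma term_step (N : Module.End K V) (a b : ℕ) (h : b = a + 1) (v : V) :
    ((-1 : K) ^ b) • (N ^ b) v = -(N (((-1 : K) ^ a) • (N ^ a) v)) := by
  subst h
  have h1 : (N ^ (a + 1)) v = N ((N ^ a) v) := by rw [pow_succ']; rfl
  have h2 : (-1 : K) ^ (a + 1) = -((-1 : K) ^ a) := by ring
  rw [h1, h2, map_smul, neg_smul]

lemma Nbr_eq_sum (m : ℕ) (bracket : MultilinearMap K (fun _ : Fin (m+1) => V) V)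
    (N : Module.End K V) (j : ℕ) (x : Fin (m+1) → V) :
    Nbr m bracket N j x =
      ∑ k ∈ Finset.range (j+1),
        ((-1 : K) ^ (j - k)) •
          (N ^ (j - k))
            (∑ S ∈ Finset.powersetCard k (Finset.univ : Finset (Fin (m+1))),
              bracket (fun i => if i ∈ S then N (x i) else x i)) := by
  induction j with
  | zero =>
      simp [Nbr, Finset.powersetCard_zero]
  | succ j ih =>
      rw [show Nbr m bracket N (j+1) x = _ - N (Nbr m bracket N j x) from rfl,
        ih, map_sum]
      conv_rhs => rw [Finset.sum_range_succ]
      simp only [Nat.sub_self, pow_zero, one_smul, Module.End.one_apply]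
      rw [sub_eq_add_neg, add_comm]
      congr 1
      rw [neg_eq_iff_eq_neg, ← Finset.sum_neg_distrib]
      refine Finset.sum_congr rfl fun k hk => ?_
      have hk' : k ≤ j := Nat.lt_succ_iff.mp (Finset.mem_range.mp hk)
      rw [term_step N (j-k) (j+1-k) (by omega), neg_neg]

/-- The Nijenhuis condition `[Nx₁,…,Nxₙ] = N([x₁,…,xₙ]_N^{n-1})` is equivalent
to the closed formula
`Σ_{j=0}^{n} (−1)^{n−j} N^{n−j}(Σ_{i₁<…<i_j} [x₁,…,Nx_{i₁},…,Nx_{i_j},…,xₙ]) = 0`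
(arity `n = m+1`). -/
theorem nijenhuis_iff_closed_formula
    (m : ℕ)
    (bracket : MultilinearMap K (fun _ : Fin (m+1) => V) V)
    (α : Module.End K V) (N : Module.End K V)
    (hNα : N ∘ₗ α = α ∘ₗ N) :
    (∀ x : Fin (m+1) → V,
      bracket (fun i => N (x i)) = N (Nbr m bracket N m x)) ↔
    (∀ x : Fin (m+1) → V,
      ∑ j ∈ Finset.range (m + 2),
        ((-1 : K) ^ (m + 1 - j)) •
          (N ^ (m + 1 - j))
            (∑ S ∈ Finset.powersetCard j (Finset.univ : Finset (Fin (m+1))),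
              bracket (fun i => if i ∈ S then N (x i) else x i)) = 0) := by
  have hfull : Finset.powersetCard (m+1) (Finset.univ : Finset (Fin (m+1))) =
      {Finset.univ} := by
    have := Finset.powersetCard_self (Finset.univ : Finset (Fin (m+1)))
    simpa using this
  have key : ∀ x : Fin (m+1) → V,
      ∑ j ∈ Finset.range (m + 2),
        ((-1 : K) ^ (m + 1 - j)) •
          (N ^ (m + 1 - j))
            (∑ S ∈ Finset.powersetCard j (Finset.univ : Finset (Fin (m+1))),
              bracket (fun i => if i ∈ S then N (x i) else x i)) =
      bracket (fun i => N (x i)) - N (Nbr m bracket N m x) := by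
    intro x
    rw [Finset.sum_range_succ]
    simp only [Nat.sub_self, pow_zero, one_smul, Module.End.one_apply]
    rw [hfull, Finset.sum_singleton]
    simp only [Finset.mem_univ, if_true]
    rw [Nbr_eq_sum, map_sum, add_comm, sub_eq_add_neg]
    congr 1
    rw [← Finset.sum_neg_distrib]
    refine Finset.sum_congr rfl fun k hk => ?_
    have hk' : k ≤ m := Nat.lt_succ_iff.mp (Finset.mem_range.mp hk)
    exact term_step N (m-k) (m+1-k) (by omega) _
  constructor
  · intro h x
    rw [key x, h x, sub_self]
  · intro h x
    have := h x
    rw [key x, sub_eq_zero] at this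
    exact this

end NijenhuisClosedFormula
end
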